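/- arXiv:2511.03686 — 6 statements merged into one kernel-verified Lean document; each statement's English description precedes it below -/
import Mathlib

section
/- Let N ≥ 2 and let Q_0, …, Q_{N−1} be independent random variables, each exponentially distributed with rate 1. Then the expectation of (max_{z} Q_z)/(∑_{z} Q_z) is at most (2/N)(ln N + 3). In particular, when N = 2^n this bound equals (2/N)(n·ln 2 + 3). -/
/-!
Write `M = max_z Q_z` and `S = ∑_z Q_z`. Since `M / S ≤ 1`, and `M / S ≤ 2 M / N` when
`S ≥ N / 2`, we get `E[M / S] ≤ (2 / N) E[M] + P(S < N / 2)`. The layer-cake formula with the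
union bound `P(M > t) ≤ min(1, N e^{-t})` gives `E[M] ≤ ln N + 1`, and Chebyshev's inequality
with `E[S] = Var[S] = N` gives `P(S < N / 2) ≤ 4 / N`.
-/

open MeasureTheory ProbabilityTheory Real Set
open scoped ENNReal Nat

namespace ProbabilityTheory

instance : IsProbabilityMeasure (expMeasure 1) := isProbabilityMeasure_expMeasure one_pos

lemma toReal_exponentialPDF_one (x : ℝ) :
    (exponentialPDF 1 x).toReal = (Ici 0).indicator (fun x => rexp (-x)) x := by
  rw [exponentialPDF_eq]
  by_cases hx : 0 ≤ x <;> simp [hx, (exp_pos _).le]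

lemma expMeasure_one_eq_withDensity : expMeasure 1 = volume.withDensity (exponentialPDF 1) := rfl

lemma measurable_exponentialPDF (r : ℝ) : Measurable (exponentialPDF r) :=
  (measurable_exponentialPDFReal r).ennreal_ofReal

lemma integral_expMeasure_one {E : Type*} [NormedAddCommGroup E] [NormedSpace ℝ E] (g : ℝ → E) :
    ∫ x, g x ∂expMeasure 1 = ∫ x in Ioi 0, rexp (-x) • g x := by
  rw [expMeasure_one_eq_withDensity, integral_withDensity_eq_integral_toReal_smul
    (measurable_exponentialPDF 1) (.of_forall fun _ => ENNReal.ofReal_lt_top)]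
  simp_rw [toReal_exponentialPDF_one, ← indicator_smul_apply_left,
    integral_indicator measurableSet_Ici, integral_Ici_eq_integral_Ioi]

lemma integrable_expMeasure_one_iff {E : Type*} [NormedAddCommGroup E] [NormedSpace ℝ E]
    (g : ℝ → E) :
    Integrable g (expMeasure 1) ↔ IntegrableOn (fun x => rexp (-x) • g x) (Ioi 0) := by
  rw [expMeasure_one_eq_withDensity, integrable_withDensity_iff_integrable_smul'
    (measurable_exponentialPDF 1) (.of_forall fun _ => ENNReal.ofReal_lt_top)]
  simp_rw [toReal_exponentialPDF_one, ← indicator_smul_apply_left]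
  rw [integrable_indicator_iff measurableSet_Ici, integrableOn_Ici_iff_integrableOn_Ioi]

lemma integral_pow_expMeasure_one (n : ℕ) : ∫ x, x ^ n ∂expMeasure 1 = n ! := by
  rw [integral_expMeasure_one, ← Gamma_nat_eq_factorial, Gamma_eq_integral (by positivity)]
  refine setIntegral_congr_fun measurableSet_Ioi fun x _ => ?_
  simp [← rpow_natCast]

lemma integrable_pow_expMeasure_one (n : ℕ) : Integrable (fun x => x ^ n) (expMeasure 1) := by
  rw [integrable_expMeasure_one_iff]
  refine (GammaIntegral_convergent (s := n + 1) (by positivity)).congr_fun (fun x _ => ?_)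
    measurableSet_Ioi
  simp [← rpow_natCast]

lemma memLp_id_expMeasure_one : MemLp id 2 (expMeasure 1) :=
  (memLp_two_iff_integrable_sq aestronglyMeasurable_id).2 (integrable_pow_expMeasure_one 2)

lemma integral_id_expMeasure_one : ∫ x, x ∂expMeasure 1 = 1 := by
  simpa using integral_pow_expMeasure_one 1

lemma variance_id_expMeasure_one : variance id (expMeasure 1) = 1 := by
  rw [variance_eq_sub memLp_id_expMeasure_one]
  simp [integral_id_expMeasure_one, integral_pow_expMeasure_one 2]
  norm_num

lemma measureReal_Ioi_expMeasure_one {t : ℝ} (ht : 0 ≤ t) :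
    (expMeasure 1).real (Ioi t) = rexp (-t) := by
  rw [← compl_Iic, probReal_compl_eq_one_sub measurableSet_Iic, ← cdf_eq_real,
    cdf_expMeasure_eq one_pos, if_pos ht]
  ring_nf

lemma ae_nonneg_expMeasure_one : ∀ᵐ x ∂expMeasure 1, 0 ≤ x := by
  have h : expMeasure 1 (Iic 0) = 0 := by
    rw [← ofReal_cdf, cdf_expMeasure_eq one_pos, if_pos le_rfl]
    simp
  rw [ae_iff]
  exact measure_mono_null (fun x (hx : ¬0 ≤ x) => (not_le.1 hx).le) h

end ProbabilityTheory

section MaxOverSum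

variable {Ω : Type*} [MeasurableSpace Ω] {μ : Measure Ω}

lemma integrableOn_min_one_mul_exp_neg {c : ℝ} (hc : 0 ≤ c) :
    IntegrableOn (fun t => min 1 (c * rexp (-t))) (Ioi 0) := by
  refine ((integrableOn_exp_neg_Ioi 0).const_mul c).mono' (by fun_prop)
    (.of_forall fun t => ?_)
  rw [norm_of_nonneg (by positivity)]
  exact min_le_right (1 : ℝ) _

lemma integral_min_one_mul_exp_neg {c : ℝ} (hc : 1 ≤ c) :
    ∫ t in Ioi 0, min 1 (c * rexp (-t)) = log c + 1 := by
  have hlog : 0 ≤ log c := log_nonneg hc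
  have hexp : ∀ t, c * rexp (-t) = rexp (log c - t) := fun t => by
    rw [exp_sub, exp_log (by linarith), div_eq_mul_inv, exp_neg]
  have hint := integrableOn_min_one_mul_exp_neg (by linarith : 0 ≤ c)
  rw [← Ioc_union_Ioi_eq_Ioi hlog] at hint ⊢
  rw [setIntegral_union (Ioc_disjoint_Ioi le_rfl) measurableSet_Ioi hint.left_of_union
    hint.right_of_union]
  have h1 : ∫ t in Ioc 0 (log c), min 1 (c * rexp (-t)) = log c := by
    rw [setIntegral_congr_fun measurableSet_Ioc (g := fun _ => 1)
      fun t ht => min_eq_left ((hexp t).symm ▸ one_le_exp (by linarith [ht.2]))]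
    simp [hlog]
  have h2 : ∫ t in Ioi (log c), min 1 (c * rexp (-t)) = 1 := by
    rw [setIntegral_congr_fun measurableSet_Ioi (g := fun t => c * rexp (-t))
      fun t ht => min_eq_right ((hexp t).symm ▸ exp_le_one_iff.2 (by linarith [mem_Ioi.1 ht])),
      integral_const_mul, integral_exp_neg_Ioi, hexp, sub_self, exp_zero]
  rw [h1, h2]

variable {ι : Type*} [Fintype ι] {X : ι → Ω → ℝ}

lemma Real.iSup_le_sum_of_nonneg {x : ι → ℝ} (hx : ∀ i, 0 ≤ x i) : ⨆ i, x i ≤ ∑ i, x i :=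
  Real.iSup_le (fun i => Finset.single_le_sum (fun j _ => hx j) (Finset.mem_univ i))
    (Finset.sum_nonneg fun i _ => hx i)

lemma integrable_iSup_of_nonneg (hX : ∀ i, Integrable (X i) μ) (hX0 : ∀ i, 0 ≤ᵐ[μ] X i) :
    Integrable (fun ω => ⨆ i, X i ω) μ := by
  refine (integrable_finsetSum Finset.univ fun i _ => hX i).mono
    (AEMeasurable.iSup fun i => (hX i).aemeasurable).aestronglyMeasurable ?_
  filter_upwards [ae_all_iff.2 hX0] with ω hω
  rw [norm_of_nonneg (Real.iSup_nonneg hω), norm_of_nonneg (Finset.sum_nonneg fun i _ => hω i)]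
  exact Real.iSup_le_sum_of_nonneg hω

lemma integral_iSup_div_sum_le [IsFiniteMeasure μ] (hX : ∀ i, Integrable (X i) μ)
    (hXm : ∀ i, Measurable (X i)) (hX0 : ∀ i, 0 ≤ᵐ[μ] X i) {c : ℝ} (hc : 0 < c) :
    ∫ ω, (⨆ i, X i ω) / ∑ i, X i ω ∂μ
      ≤ (∫ ω, ⨆ i, X i ω ∂μ) / c + μ.real {ω | ∑ i, X i ω < c} := by
  set M : Ω → ℝ := fun ω => ⨆ i, X i ω
  set S : Ω → ℝ := fun ω => ∑ i, X i ω
  have hM := integrable_iSup_of_nonneg hX hX0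
  have hsmall : MeasurableSet {ω | S ω < c} :=
    measurableSet_lt (Finset.measurable_sum _ fun i _ => hXm i) measurable_const
  have hind : Integrable ({ω | S ω < c}.indicator 1) μ :=
    (integrable_const (1 : ℝ)).indicator hsmall
  have hMS : ∀ᵐ ω ∂μ, 0 ≤ M ω ∧ M ω ≤ S ω := by
    filter_upwards [ae_all_iff.2 hX0] with ω hω
    exact ⟨Real.iSup_nonneg hω, Real.iSup_le_sum_of_nonneg hω⟩
  -- `M / S ≤ 1` always, and `M / S ≤ M / c` once `S ≥ c`.
  have hpt : ∀ᵐ ω ∂μ, M ω / S ω ≤ M ω / c + {ω | S ω < c}.indicator 1 ω := by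
    filter_upwards [hMS] with ω ⟨hM0, hMS⟩
    by_cases hSc : S ω < c
    · rw [indicator_of_mem (s := {ω | S ω < c}) hSc, Pi.one_apply]
      have := div_le_one_of_le₀ hMS (hM0.trans hMS)
      have := div_nonneg hM0 hc.le
      linarith
    · rw [indicator_of_notMem (s := {ω | S ω < c}) hSc, add_zero]
      exact div_le_div_of_nonneg_left hM0 hc (not_lt.1 hSc)
  have hnn : 0 ≤ᵐ[μ] fun ω => M ω / S ω := by
    filter_upwards [hMS] with ω ⟨hM0, hMS⟩ using div_nonneg hM0 (hM0.trans hMS)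
  calc ∫ ω, M ω / S ω ∂μ ≤ ∫ ω, M ω / c + {ω | S ω < c}.indicator 1 ω ∂μ :=
        integral_mono_of_nonneg hnn ((hM.div_const c).add hind) hpt
    _ = (∫ ω, M ω ∂μ) / c + μ.real {ω | S ω < c} := by
        rw [integral_add (hM.div_const c) hind, integral_div, integral_indicator_one hsmall]

variable [IsProbabilityMeasure μ]

-- Layer cake, with the union bound `P(max_i X i > t) ≤ min 1 (card ι * exp (-t))`.
lemma integral_iSup_le_log_card_add_one [Nonempty ι] (hX : ∀ i, Integrable (X i) μ)
    (hX0 : ∀ i, 0 ≤ᵐ[μ] X i) (htail : ∀ i t, 0 < t → μ.real {ω | t < X i ω} ≤ rexp (-t)) :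
    ∫ ω, ⨆ i, X i ω ∂μ ≤ log (Fintype.card ι) + 1 := by
  have hM0 : 0 ≤ᵐ[μ] fun ω => ⨆ i, X i ω := by
    filter_upwards [ae_all_iff.2 hX0] with ω hω using Real.iSup_nonneg hω
  have htailM : ∀ t, 0 < t →
      μ.real {ω | t < ⨆ i, X i ω} ≤ min 1 (Fintype.card ι * rexp (-t)) := by
    intro t ht
    have hunion : {ω | t < ⨆ i, X i ω} = ⋃ i, {ω | t < X i ω} := by
      ext ω
      simp [lt_ciSup_iff (Finite.bddAbove_range _)]
    refine le_min measureReal_le_one ?_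
    calc μ.real {ω | t < ⨆ i, X i ω} ≤ ∑ i, μ.real {ω | t < X i ω} :=
          hunion ▸ measureReal_iUnion_fintype_le _
      _ ≤ ∑ _ : ι, rexp (-t) := Finset.sum_le_sum fun i _ => htail i t ht
      _ = Fintype.card ι * rexp (-t) := by simp
  rw [(integrable_iSup_of_nonneg hX hX0).integral_eq_integral_meas_lt hM0,
    ← integral_min_one_mul_exp_neg (by exact_mod_cast Fintype.card_pos)]
  exact integral_mono_of_nonneg (.of_forall fun _ => measureReal_nonneg)
    (integrableOn_min_one_mul_exp_neg (Nat.cast_nonneg _))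
    ((ae_restrict_iff' measurableSet_Ioi).2 (.of_forall htailM))

lemma measureReal_sum_lt_half_card_le [Nonempty ι] (hX : ∀ i, MemLp (X i) 2 μ)
    (hindep : Pairwise fun i j => IndepFun (X i) (X j) μ) (hmean : ∀ i, μ[X i] = 1)
    (hvar : ∀ i, Var[X i; μ] = 1) :
    μ.real {ω | ∑ i, X i ω < Fintype.card ι / 2} ≤ 4 / Fintype.card ι := by
  set n : ℝ := (Fintype.card ι : ℝ)
  set S : Ω → ℝ := fun ω => ∑ i, X i ω
  have hn : 0 < n := Nat.cast_pos.2 Fintype.card_pos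
  have hS : MemLp S 2 μ := memLp_finsetSum _ fun i _ => hX i
  have hmeanS : μ[S] = n := by
    rw [integral_finsetSum _ fun i _ => (hX i).integrable one_le_two]
    simp [hmean, n]
  have hvarS : Var[S; μ] = n := by
    rw [show S = ∑ i, X i from (Finset.sum_fn _ _).symm,
      IndepFun.variance_sum (fun i _ => hX i) fun i _ j _ hij => hindep hij]
    simp [hvar, n]
  have hsub : {ω | S ω < n / 2} ⊆ {ω | n / 2 ≤ |S ω - μ[S]|} := fun ω (hω : S ω < n / 2) => by
    change n / 2 ≤ |S ω - μ[S]|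
    rw [hmeanS, abs_sub_comm]
    exact (by linarith : n / 2 ≤ n - S ω).trans (le_abs_self _)
  calc μ.real {ω | S ω < n / 2} ≤ μ.real {ω | n / 2 ≤ |S ω - μ[S]|} := measureReal_mono hsub
    _ ≤ Var[S; μ] / (n / 2) ^ 2 := ENNReal.toReal_le_of_le_ofReal
        (div_nonneg (variance_nonneg _ _) (by positivity))
        (meas_ge_le_variance_div_sq hS (by positivity))
    _ = 4 / n := by
        rw [hvarS]
        field_simp
        ring

end MaxOverSum

/-- If `Q 0, …, Q (N-1)` are independent `Exp(1)` random variables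
(`N ≥ 2`), then `E[(max_z Q z) / (∑ z Q z)] ≤ (2/N) (ln N + 3)`; moreover when
`N = 2^n` this bound equals `(2/N) (n ln 2 + 3)`. -/
theorem stmt0 {Ω : Type*} [MeasurableSpace Ω] (μ : Measure Ω) [IsProbabilityMeasure μ]
    (N : ℕ) (hN : 2 ≤ N) (Q : Fin N → Ω → ℝ)
    (hmeas : ∀ z, Measurable (Q z))
    (hindep : iIndepFun Q μ)
    (hlaw : ∀ z, Measure.map (Q z) μ = expMeasure 1) :
    (∫ ω, (⨆ z : Fin N, Q z ω) / (∑ z : Fin N, Q z ω) ∂μ)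
      ≤ (2 / N) * (Real.log N + 3)
    ∧ ∀ n : ℕ, N = 2 ^ n →
        (2 / (N : ℝ)) * (Real.log N + 3) = (2 / N) * (n * Real.log 2 + 3) := by
  have : Nonempty (Fin N) := ⟨⟨0, by omega⟩⟩
  have hexp : ∀ z, IdentDistrib (Q z) id μ (expMeasure 1) :=
    fun z => ⟨(hmeas z).aemeasurable, aemeasurable_id, by simp [hlaw z]⟩
  have hL2 : ∀ z, MemLp (Q z) 2 μ := fun z => (hexp z).memLp_iff.2 memLp_id_expMeasure_one
  have hL1 : ∀ z, Integrable (Q z) μ := fun z => (hL2 z).integrable one_le_two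
  have hnonneg : ∀ z, 0 ≤ᵐ[μ] Q z :=
    fun z => (hexp z).symm.ae_snd measurableSet_Ici ae_nonneg_expMeasure_one
  have htail : ∀ z t, 0 < t → μ.real {ω | t < Q z ω} ≤ rexp (-t) := fun z t ht => by
    rw [measureReal_def, show {ω | t < Q z ω} = Q z ⁻¹' Ioi t from rfl,
      (hexp z).measure_mem_eq measurableSet_Ioi, preimage_id, ← measureReal_def,
      measureReal_Ioi_expMeasure_one ht.le]
  have hmean : ∀ z, μ[Q z] = 1 := fun z => (hexp z).integral_eq.trans integral_id_expMeasure_one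
  have hvar : ∀ z, Var[Q z; μ] = 1 :=
    fun z => (hexp z).variance_eq.trans variance_id_expMeasure_one
  refine ⟨?_, fun n hn => by rw [hn, Nat.cast_pow, Nat.cast_ofNat, log_pow]⟩
  calc ∫ ω, (⨆ z, Q z ω) / ∑ z, Q z ω ∂μ
      ≤ (∫ ω, ⨆ z, Q z ω ∂μ) / (N / 2) + μ.real {ω | ∑ z, Q z ω < N / 2} :=
        integral_iSup_div_sum_le hL1 hmeas hnonneg (by positivity)
    _ ≤ (log N + 1) / (N / 2) + 4 / N := by
        gcongr
        · simpa using integral_iSup_le_log_card_add_one hL1 hnonneg htail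
        · simpa using measureReal_sum_lt_half_card_le hL2 (fun _ _ hij => hindep.indepFun hij)
            hmean hvar
    _ = 2 / N * (log N + 3) := by
        field_simp
        ring
end

section
/- Let n ≥ 1, N = 2^n, let P be a probability mass function on Fin N with max_z P(z) ≤ 4·(ln N)/N, and let z_1, …, z_k be i.i.d. samples from P. Then for every integer j with 1 ≤ j ≤ k, the probability that there exists some s ∈ Fin N occurring at least j times among z_1, …, z_k is at most (4k·ln N)^j / (j · N^{j−1}). -/
open MeasureTheory ProbabilityTheory Finset
open scoped ENNReal

/-!
Union bound: some value `s` occurs at least `j` times only if, for some `s` and some `j`-set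
`T` of indices, all samples indexed by `T` equal `s`. By independence each such event has
probability at most `p ^ j`, where `p` bounds the point masses, so the probability is at most
`N * C(k, j) * p ^ j`; with `j * C(k, j) ≤ k ^ j` and `p ≤ 4 ln N / N` this is the bound.
-/

theorem Nat.mul_choose_le_pow (k j : ℕ) : j * k.choose j ≤ k ^ j :=
  calc j * k.choose j ≤ j.factorial * k.choose j := Nat.mul_le_mul_right _ j.self_le_factorial
    _ = k.descFactorial j := (k.descFactorial_eq_factorial_mul_choose j).symm
    _ ≤ k ^ j := k.descFactorial_le_pow j

namespace ProbabilityTheory.iIndepFun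

variable {Ω ι β : Type*} [MeasurableSpace Ω] {μ : Measure Ω}
  [MeasurableSpace β] [MeasurableSingletonClass β] {z : ι → Ω → β} {p : ℝ≥0∞}

theorem measure_biInter_preimage_singleton_le (hindep : iIndepFun z μ)
    (hp : ∀ i s, μ (z i ⁻¹' {s}) ≤ p) (T : Finset ι) (s : β) :
    μ (⋂ i ∈ T, z i ⁻¹' {s}) ≤ p ^ #T := by
  rw [hindep.meas_biInter fun i _ => ⟨{s}, measurableSet_singleton s, rfl⟩]
  exact (prod_le_prod' fun i _ => hp i s).trans_eq (prod_const p)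

variable [Fintype ι] [DecidableEq β]

theorem measure_le_card_filter_eq_le (hindep : iIndepFun z μ)
    (hp : ∀ i s, μ (z i ⁻¹' {s}) ≤ p) (s : β) (j : ℕ) :
    μ {ω | j ≤ #{i | z i ω = s}} ≤ (Fintype.card ι).choose j * p ^ j := by
  have hsubset : {ω | j ≤ #{i | z i ω = s}} ⊆
      ⋃ T ∈ powersetCard j (univ : Finset ι), ⋂ i ∈ T, z i ⁻¹' {s} := by
    intro ω hω
    obtain ⟨T, hT, hTcard⟩ := exists_subset_card_eq hω
    refine Set.mem_biUnion (mem_powersetCard.2 ⟨subset_univ T, hTcard⟩) ?_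
    exact Set.mem_biInter fun i hi => (mem_filter.1 (hT hi)).2
  calc μ {ω | j ≤ #{i | z i ω = s}}
      ≤ ∑ T ∈ powersetCard j (univ : Finset ι), μ (⋂ i ∈ T, z i ⁻¹' {s}) :=
        (measure_mono hsubset).trans (measure_biUnion_finset_le _ _)
    _ ≤ ∑ _T ∈ powersetCard j (univ : Finset ι), p ^ j := sum_le_sum fun T hT => by
        simpa only [(mem_powersetCard.1 hT).2] using
          hindep.measure_biInter_preimage_singleton_le hp T s
    _ = (Fintype.card ι).choose j * p ^ j := by
        rw [sum_const, card_powersetCard, card_univ, nsmul_eq_mul]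

theorem measure_exists_le_card_filter_eq_le [Fintype β] (hindep : iIndepFun z μ)
    (hp : ∀ i s, μ (z i ⁻¹' {s}) ≤ p) (j : ℕ) :
    μ {ω | ∃ s, j ≤ #{i | z i ω = s}} ≤ Fintype.card β * ((Fintype.card ι).choose j * p ^ j) := by
  calc μ {ω | ∃ s, j ≤ #{i | z i ω = s}}
      = μ (⋃ s, {ω | j ≤ #{i | z i ω = s}}) := by rw [Set.ofPred_exists]
    _ ≤ ∑ s, μ {ω | j ≤ #{i | z i ω = s}} := measure_iUnion_fintype_le μ _
    _ ≤ ∑ _s : β, (Fintype.card ι).choose j * p ^ j :=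
        sum_le_sum fun s _ => hindep.measure_le_card_filter_eq_le hp s j
    _ = Fintype.card β * ((Fintype.card ι).choose j * p ^ j) := by
        rw [sum_const, card_univ, nsmul_eq_mul]

end ProbabilityTheory.iIndepFun

theorem card_mul_choose_mul_div_pow_le {N k j : ℕ} {a : ℝ} (hN : 0 < N) (ha : 0 ≤ a)
    (hj : 1 ≤ j) : N * (k.choose j * (a / N) ^ j) ≤ (k * a) ^ j / (j * (N : ℝ) ^ (j - 1)) := by
  have hchoose : (j : ℝ) * k.choose j ≤ (k : ℝ) ^ j := by exact_mod_cast k.mul_choose_le_pow j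
  have hNj : (N : ℝ) ^ j = N * (N : ℝ) ^ (j - 1) := by rw [← pow_succ']; congr 1; omega
  have hN' : (0 : ℝ) < N := by exact_mod_cast hN
  have hj' : (0 : ℝ) < j := by exact_mod_cast hj
  rw [le_div_iff₀ (by positivity), div_pow, mul_pow, hNj]
  calc N * (k.choose j * (a ^ j / (N * N ^ (j - 1)))) * (j * N ^ (j - 1))
      = (j * k.choose j) * a ^ j := by field_simp
    _ ≤ k ^ j * a ^ j := by gcongr

theorem stmt3_general {Ω : Type*} [MeasurableSpace Ω] (μ : Measure Ω) [IsProbabilityMeasure μ]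
    (N k : ℕ)
    (P : PMF (Fin N))
    (hp : ∀ s : Fin N, (P s).toReal ≤ 4 * Real.log N / N)
    (z : Fin k → Ω → Fin N)
    (hmeas : ∀ i, Measurable (z i))
    (hindep : iIndepFun z μ)
    (hlaw : ∀ i, Measure.map (z i) μ = P.toMeasure)
    (j : ℕ) (hj1 : 1 ≤ j) :
    μ {ω | ∃ s : Fin N, j ≤ (Finset.univ.filter (fun i : Fin k => z i ω = s)).card}
      ≤ ENNReal.ofReal ((4 * k * Real.log N) ^ j / (j * (N : ℝ) ^ (j - 1))) := by
  -- `Fin N` carries a PMF, so it is nonempty and the bound `4 ln N / N` on `P` is nonnegative.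
  obtain ⟨s₀, -⟩ := P.support_nonempty
  have hr : 0 ≤ 4 * Real.log N / N := ENNReal.toReal_nonneg.trans (hp s₀)
  have hsingle : ∀ i s, μ (z i ⁻¹' {s}) ≤ ENNReal.ofReal (4 * Real.log N / N) := fun i s => by
    rw [← Measure.map_apply (hmeas i) (measurableSet_singleton s), hlaw i,
      PMF.toMeasure_apply_singleton _ _ (measurableSet_singleton s)]
    exact (ENNReal.le_ofReal_iff_toReal_le (P.apply_ne_top s) hr).2 (hp s)
  have hlog : 0 ≤ 4 * Real.log N := by
    simpa using (le_div_iff₀ (by exact_mod_cast s₀.pos : (0 : ℝ) < N)).1 hr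
  have hbound := card_mul_choose_mul_div_pow_le (k := k) s₀.pos hlog hj1
  refine (hindep.measure_exists_le_card_filter_eq_le hsingle j).trans ?_
  rw [Fintype.card_fin, Fintype.card_fin, ← ENNReal.ofReal_pow hr,
    ← ENNReal.ofReal_natCast (k.choose j), ← ENNReal.ofReal_mul (by positivity),
    ← ENNReal.ofReal_natCast N, ← ENNReal.ofReal_mul (by positivity)]
  exact ENNReal.ofReal_le_ofReal (hbound.trans_eq (by ring))

/-- Let `N = 2^n` (`n ≥ 1`) and let `z 1, …, z k` be i.i.d. samples
from a PMF `P` on `Fin N` with `max_s P s ≤ 4 ln N / N`. Then for every `1 ≤ j ≤ k`,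
the probability that some bitstring occurs at least `j` times among the samples is at
most `(4 k ln N)^j / (j * N^(j-1))`. -/
theorem stmt3 {Ω : Type*} [MeasurableSpace Ω] (μ : Measure Ω) [IsProbabilityMeasure μ]
    (n N k : ℕ) (hn : 1 ≤ n) (hN : N = 2 ^ n)
    (P : PMF (Fin N))
    (hp : ∀ s : Fin N, (P s).toReal ≤ 4 * Real.log N / N)
    (z : Fin k → Ω → Fin N)
    (hmeas : ∀ i, Measurable (z i))
    (hindep : iIndepFun z μ)
    (hlaw : ∀ i, Measure.map (z i) μ = P.toMeasure)
    (j : ℕ) (hj1 : 1 ≤ j) (hjk : j ≤ k) :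
    μ {ω | ∃ s : Fin N, j ≤ (Finset.univ.filter (fun i : Fin k => z i ω = s)).card}
      ≤ ENNReal.ofReal ((4 * k * Real.log N) ^ j / (j * (N : ℝ) ^ (j - 1))) :=
  stmt3_general μ N k P hp z hmeas hindep hlaw j hj1
end

section
/- Fix n ≥ 50, N = 2^n, integers m ≥ 1 and k ≥ 1 with k ≤ 2^{n/2} and m, n ≤ 10^6, and δ ∈ [0,1]. For each i ∈ [m] let P^{(i)} be a probability mass function on Fin N with max_z P^{(i)}(z) ≤ 4·(ln N)/N. On a common probability space, let (Z_j^{(i)})_{j∈[k], i∈[m]} be mutually independent random variables with Z_j^{(i)} distributed according to P^{(i)}, and let Z⃗ = (Z^{(1)},…,Z^{(m)}) be any (Fin N)^m-valued random variable on the same space. If (1/m)·∑_{i∈[m]} Pr[Z^{(i)} ∈ {Z_j^{(i)} : j ∈ [k]}] ≥ 1 − δ, then the Shannon entropy of Z⃗ in bits satisfies H[Z⃗] ≥ m·[n(1 − δ) − log₂ n − log₂ k − 3]. -/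
/-!
Record, along with the output `Zvec`, the set `S` of coordinates in which it hits one of the
samples. If the samples of coordinate `i` all have point probabilities at most `c`, a union bound
over the `k` samples of each coordinate together with independence across coordinates shows that
every cell `{Zvec = v, S = s}` has probability at most `ε ^ |s|` with `ε = k c`. Hence the joint
entropy of `(Zvec, S)` is at least `E|S| · log₂ (1/ε)`, while forgetting `S` costs at most
`log₂ 2^m = m` bits. With `E|S| ≥ m (1 - δ)` and `log₂ (1/ε) ≥ n - 2 - log₂ n - log₂ k` this is
the claimed bound.
-/

open MeasureTheory ProbabilityTheory Real

section Entropy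

variable {α β : Type*} [Fintype α] [Fintype β]

theorem Real.sum_negMulLog_le [Nonempty β] (f : β → ℝ) (hf : ∀ b, 0 ≤ f b) :
    ∑ b, negMulLog (f b) ≤ negMulLog (∑ b, f b) + (∑ b, f b) * log (Fintype.card β) := by
  set c : ℝ := (Fintype.card β : ℝ)
  have hc : 0 < c := by positivity
  have jensen := concaveOn_negMulLog.le_map_sum (t := Finset.univ) (w := fun _ => c⁻¹)
    (p := fun b => c * f b) (fun _ _ => by positivity) (by simp [c])
    (fun b _ => Set.mem_Ici.2 (mul_nonneg hc.le (hf b)))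
  have hsum : ∑ b, c⁻¹ • (c * f b) = ∑ b, f b := by
    simp [smul_eq_mul, ← mul_assoc, inv_mul_cancel₀ hc.ne']
  have hterm (b : β) : c⁻¹ • negMulLog (c * f b) = negMulLog (f b) - f b * log c := by
    rw [negMulLog_mul, negMulLog, smul_eq_mul]; field_simp; ring
  simp only [hsum, hterm, Finset.sum_sub_distrib, ← Finset.sum_mul] at jensen
  linarith

noncomputable def shannonEntropy (p : α → ℝ) : ℝ :=
  -∑ a, p a * logb 2 (p a)

theorem shannonEntropy_eq_sum_negMulLog_div (p : α → ℝ) :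
    shannonEntropy p = (∑ a, negMulLog (p a)) / log 2 := by
  simp only [shannonEntropy, negMulLog, logb, Finset.sum_div, ← Finset.sum_neg_distrib]
  congr 1; ext a; ring

theorem shannonEntropy_le_marginal_add_logb_card [Nonempty β] (p : α × β → ℝ)
    (hp0 : ∀ x, 0 ≤ p x) (hp1 : ∑ x, p x = 1) :
    shannonEntropy p ≤ shannonEntropy (fun a => ∑ b, p (a, b)) + logb 2 (Fintype.card β) := by
  have hmarg : ∑ a, ∑ b, p (a, b) = 1 := by rwa [← Fintype.sum_prod_type]
  have key : ∑ x, negMulLog (p x) ≤ ∑ a, negMulLog (∑ b, p (a, b)) + log (Fintype.card β) :=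
    calc ∑ x, negMulLog (p x) = ∑ a, ∑ b, negMulLog (p (a, b)) := Fintype.sum_prod_type _
      _ ≤ ∑ a, (negMulLog (∑ b, p (a, b)) + (∑ b, p (a, b)) * log (Fintype.card β)) :=
        Finset.sum_le_sum fun a _ => sum_negMulLog_le _ fun b => hp0 (a, b)
      _ = _ := by rw [Finset.sum_add_distrib, ← Finset.sum_mul, hmarg, one_mul]
  rw [shannonEntropy_eq_sum_negMulLog_div, shannonEntropy_eq_sum_negMulLog_div, logb,
    ← add_div]
  exact div_le_div_of_nonneg_right key (log_pos one_lt_two).le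

theorem sum_mul_neg_logb_le_shannonEntropy (p : α → ℝ) (c : α → ℕ) {ε : ℝ}
    (hp0 : ∀ a, 0 ≤ p a) (hpε : ∀ a, p a ≤ ε ^ c a) :
    (∑ a, p a * c a) * -logb 2 ε ≤ shannonEntropy p := by
  have hterm (a : α) : p a * c a * -logb 2 ε ≤ -(p a * logb 2 (p a)) := by
    rcases (hp0 a).eq_or_lt with h | h
    · simp [← h]
    · have : logb 2 (p a) ≤ c a * logb 2 ε := by
        rw [← logb_pow]; exact logb_le_logb_of_le one_lt_two h (hpε a)
      nlinarith
  rw [shannonEntropy, Finset.sum_mul, ← Finset.sum_neg_distrib]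
  exact Finset.sum_le_sum fun a _ => hterm a

end Entropy

open Classical in
noncomputable def hitPattern {Ω ι : Type*} [Fintype ι] (H : ι → Set Ω) (ω : Ω) : Finset ι :=
  {i | ω ∈ H i}

theorem mem_hitPattern {Ω ι : Type*} [Fintype ι] {H : ι → Set Ω} {ω : Ω} {i : ι} :
    i ∈ hitPattern H ω ↔ ω ∈ H i := by
  simp [hitPattern]

section Probability

variable {Ω ι κ β : Type*} [MeasurableSpace Ω] {μ : Measure Ω}

theorem measure_biInter_iUnion_preimage_le [MeasurableSpace β] [Fintype κ]
    {X : κ × ι → Ω → β} (hX : iIndepFun X μ) {B : ι → Set β} (hB : ∀ i, MeasurableSet (B i))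
    (s : Finset ι) :
    μ (⋂ i ∈ s, ⋃ j, X (j, i) ⁻¹' B i) ≤ ∏ i ∈ s, ∑ j, μ (X (j, i) ⁻¹' B i) := by
  classical
  -- Union bound over the choice `g i` of the sample hit in each coordinate; for fixed `g` the
  -- indices `(g i, i)` are distinct, so independence factorizes the intersection.
  have hcover : ⋂ i ∈ s, ⋃ j, X (j, i) ⁻¹' B i ⊆ ⋃ g : s → κ, ⋂ i : s, X (g i, i) ⁻¹' B i := by
    intro ω hω
    simp only [Set.mem_iInter, Set.mem_iUnion] at hω ⊢
    exact ⟨fun i => (hω i i.2).choose, fun i => (hω i i.2).choose_spec⟩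
  have hchoice (g : s → κ) :
      μ (⋂ i : s, X (g i, i) ⁻¹' B i) = ∏ i : s, μ (X (g i, i) ⁻¹' B i) := by
    have hinj : Function.Injective fun i : s => (g i, (i : ι)) :=
      fun i i' h => Subtype.ext (congrArg Prod.snd h)
    exact (hX.precomp hinj).meas_iInter fun i => ⟨B i, hB i, rfl⟩
  calc μ (⋂ i ∈ s, ⋃ j, X (j, i) ⁻¹' B i)
      ≤ ∑ g : s → κ, μ (⋂ i : s, X (g i, i) ⁻¹' B i) :=
        (measure_mono hcover).trans (measure_iUnion_fintype_le μ _)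
    _ = ∏ i : s, ∑ j, μ (X (j, i) ⁻¹' B i) := by simp only [hchoice, Fintype.prod_sum]
    _ = ∏ i ∈ s, ∑ j, μ (X (j, i) ⁻¹' B i) :=
        Finset.prod_coe_sort s fun i => ∑ j, μ (X (j, i) ⁻¹' B i)

theorem measureReal_biInter_iUnion_preimage_le_pow [MeasurableSpace β] [IsFiniteMeasure μ]
    [Fintype κ] {X : κ × ι → Ω → β} (hX : iIndepFun X μ) {B : ι → Set β}
    (hB : ∀ i, MeasurableSet (B i)) {c : ℝ}
    (hc : ∀ j i, μ.real (X (j, i) ⁻¹' B i) ≤ c) (s : Finset ι) :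
    μ.real (⋂ i ∈ s, ⋃ j, X (j, i) ⁻¹' B i) ≤ (Fintype.card κ * c) ^ s.card :=
  calc μ.real (⋂ i ∈ s, ⋃ j, X (j, i) ⁻¹' B i)
      ≤ ∏ i ∈ s, ∑ j, μ.real (X (j, i) ⁻¹' B i) := by
        simp only [measureReal_def, ← ENNReal.toReal_sum (fun _ _ => measure_ne_top _ _),
          ← ENNReal.toReal_prod]
        refine ENNReal.toReal_mono ?_ (measure_biInter_iUnion_preimage_le hX hB s)
        exact ENNReal.prod_ne_top fun _ _ => ENNReal.sum_ne_top.2 fun _ _ => measure_ne_top _ _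
    _ ≤ ∏ _i ∈ s, (Fintype.card κ * c) :=
        Finset.prod_le_prod (fun _ _ => Finset.sum_nonneg fun _ _ => measureReal_nonneg)
          fun i _ => (Finset.sum_le_sum fun j _ => hc j i).trans (by simp)
    _ = (Fintype.card κ * c) ^ s.card := Finset.prod_const _

theorem sum_measureReal_mem_eq_sum_mul_card [IsFiniteMeasure μ] [Fintype β] [MeasurableSpace β]
    [MeasurableSingletonClass β] [Fintype ι] [DecidableEq ι] {X : Ω → β} (hX : Measurable X)
    (T : β → Finset ι) :
    ∑ i, μ.real {ω | i ∈ T (X ω)} = ∑ a, μ.real (X ⁻¹' {a}) * (T a).card := by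
  have hfiber (i : ι) :
      μ.real {ω | i ∈ T (X ω)} = ∑ a, if i ∈ T a then μ.real (X ⁻¹' {a}) else 0 := by
    rw [← Finset.sum_filter, sum_measureReal_preimage_singleton _
      fun a _ => hX (measurableSet_singleton a)]
    congr 1; ext ω; simp
  simp only [hfiber]
  rw [Finset.sum_comm]
  refine Finset.sum_congr rfl fun a _ => ?_
  rw [Finset.sum_ite_mem, Finset.univ_inter, Finset.sum_const, nsmul_eq_mul, mul_comm]

theorem sum_measureReal_preimage_prodMk_singleton [IsFiniteMeasure μ] {α : Type*}
    [Fintype β] [MeasurableSpace α] [MeasurableSpace β] [MeasurableSingletonClass α]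
    [MeasurableSingletonClass β] {Y : Ω → α} {S : Ω → β} (h : Measurable fun ω => (Y ω, S ω))
    (a : α) : ∑ b, μ.real ((fun ω => (Y ω, S ω)) ⁻¹' {(a, b)}) = μ.real (Y ⁻¹' {a}) := by
  have := sum_measureReal_preimage_singleton (μ := μ) ({a} ×ˢ Finset.univ)
    fun x _ => h (measurableSet_singleton x)
  rw [Finset.sum_product, Finset.sum_singleton] at this
  rw [this]
  congr 1
  ext ω
  simp [eq_comm]

theorem measurable_hitPattern [Fintype ι] {H : ι → Set Ω} (hH : ∀ i, MeasurableSet (H i)) :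
    Measurable (hitPattern H) :=
  measurable_finset_iff.2 fun i => by
    simpa only [mem_hitPattern] using (measurableSet_setOfPred (p := (· ∈ H i))).1 (hH i)

theorem le_shannonEntropy_of_hits [IsProbabilityMeasure μ] [Fintype ι] [DecidableEq ι]
    [Fintype κ] [Fintype β] [MeasurableSpace β] [MeasurableSingletonClass β]
    {Zs : κ × ι → Ω → β} (hZs : ∀ x, Measurable (Zs x)) (hindep : iIndepFun Zs μ)
    {Zvec : Ω → ι → β} (hZvec : Measurable Zvec) {c : ℝ}
    (hc : ∀ x b, μ.real (Zs x ⁻¹' {b}) ≤ c) :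
    (∑ i, μ.real {ω | ∃ j, Zs (j, i) ω = Zvec ω i}) * -logb 2 (Fintype.card κ * c)
        - Fintype.card ι ≤ shannonEntropy fun v => μ.real {ω | Zvec ω = v} := by
  set H : ι → Set Ω := fun i => {ω | ∃ j, Zs (j, i) ω = Zvec ω i}
  have hH (i : ι) : MeasurableSet (H i) := by
    simp only [H, Set.ofPred_exists]
    exact MeasurableSet.iUnion fun j =>
      measurableSet_eq_fun (hZs (j, i)) ((measurable_pi_apply i).comp hZvec)
  set X : Ω → (ι → β) × Finset ι := fun ω => (Zvec ω, hitPattern H ω)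
  have hX : Measurable X := hZvec.prodMk (measurable_hitPattern hH)
  set p : (ι → β) × Finset ι → ℝ := fun x => μ.real (X ⁻¹' {x})
  have hmarginal (v : ι → β) : ∑ s, p (v, s) = μ.real {ω | Zvec ω = v} :=
    sum_measureReal_preimage_prodMk_singleton hX v
  have htotal : ∑ x, p x = 1 := by
    rw [sum_measureReal_preimage_singleton _ fun x _ => hX (measurableSet_singleton x),
      Finset.coe_univ, Set.preimage_univ, probReal_univ]
  have hcell (x : (ι → β) × Finset ι) : p x ≤ (Fintype.card κ * c) ^ x.2.card := by
    obtain ⟨v, s⟩ := x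
    refine (measureReal_mono fun ω hω => ?_).trans
      (measureReal_biInter_iUnion_preimage_le_pow hindep (fun i => measurableSet_singleton (v i))
        (fun j i => hc (j, i) (v i)) s)
    simp only [X, Set.mem_preimage, Set.mem_singleton_iff, Prod.mk.injEq] at hω
    obtain ⟨rfl, rfl⟩ := hω
    simp only [Set.mem_iInter, Set.mem_iUnion]
    exact fun i hi => mem_hitPattern.1 hi
  have hhits : ∑ i, μ.real (H i) = ∑ x, p x * x.2.card := by
    rw [← sum_measureReal_mem_eq_sum_mul_card hX Prod.snd]
    simp only [X, mem_hitPattern, Set.ofPred_mem_eq]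
  calc (∑ i, μ.real (H i)) * -logb 2 (Fintype.card κ * c) - Fintype.card ι
      ≤ shannonEntropy p - logb 2 (Fintype.card (Finset ι)) := by
        rw [hhits, Fintype.card_finset, Nat.cast_pow, Nat.cast_ofNat, logb_pow,
          logb_self_eq_one one_lt_two, mul_one]
        exact sub_le_sub_right (sum_mul_neg_logb_le_shannonEntropy p _
          (fun _ => measureReal_nonneg) hcell) _
    _ ≤ shannonEntropy fun v => μ.real {ω | Zvec ω = v} := by
        rw [sub_le_iff_le_add]
        simpa only [hmarginal] using
          shannonEntropy_le_marginal_add_logb_card p (fun _ => measureReal_nonneg) htotal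

end Probability

theorem sixteen_mul_sq_le_two_pow {n : ℕ} (hn : 12 ≤ n) : 16 * n ^ 2 ≤ 2 ^ n := by
  induction n, hn using Nat.le_induction with
  | base => norm_num
  | succ n hn ih => rw [pow_succ 2 n]; nlinarith

theorem logb_two_le_half_sub_two {n : ℕ} (hn : 12 ≤ n) : logb 2 n ≤ n / 2 - 2 := by
  have h := logb_le_logb_of_le one_lt_two (by positivity)
    (show (2 ^ 4 * (n : ℝ) ^ 2) ≤ 2 ^ n by exact_mod_cast sixteen_mul_sq_le_two_pow hn)
  rw [logb_mul (by positivity) (by positivity), logb_pow, logb_pow, logb_pow,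
    logb_self_eq_one one_lt_two] at h
  push_cast at h
  linarith

theorem logb_mul_log_two_pow_div_le {n : ℕ} (hn : 0 < n) {k : ℝ} (hk : 0 < k) :
    logb 2 (k * (4 * log (2 ^ n) / 2 ^ n)) ≤ logb 2 k + logb 2 n + 2 - n := by
  have hlog : log (2 ^ n) ≤ n := by
    rw [log_pow]
    exact mul_le_of_le_one_right n.cast_nonneg (log_two_lt_d9.le.trans (by norm_num))
  have hlog0 : 0 < log (2 ^ n) := log_pos (one_lt_pow₀ one_lt_two hn.ne')
  have hn0 : (0 : ℝ) < n := by exact_mod_cast hn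
  calc logb 2 (k * (4 * log (2 ^ n) / 2 ^ n)) ≤ logb 2 (k * (2 ^ 2 * n / 2 ^ n)) :=
        logb_le_logb_of_le one_lt_two (by positivity) (mul_le_mul_of_nonneg_left
          (div_le_div_of_nonneg_right (by linarith) (by positivity)) hk.le)
    _ = logb 2 k + logb 2 n + 2 - n := by
        rw [logb_mul hk.ne' (by positivity), logb_div (by positivity) (by positivity),
          logb_mul (by positivity) hn0.ne', logb_pow, logb_pow, logb_self_eq_one one_lt_two]
        ring

theorem stmt7_general {Ω : Type*} [MeasurableSpace Ω] (μ : Measure Ω) [IsProbabilityMeasure μ]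
    (n N m k : ℕ) (hn : 50 ≤ n) (hN : N = 2 ^ n)
    (hk : 1 ≤ k) (hk2 : (k : ℝ) ≤ 2 ^ ((n : ℝ) / 2))
    (δ : ℝ) (hδ0 : 0 ≤ δ)
    (P : Fin m → PMF (Fin N))
    (hP : ∀ i z, ((P i) z).toReal ≤ 4 * Real.log N / N)
    (Zs : Fin k × Fin m → Ω → Fin N)
    (hZsmeas : ∀ ji, Measurable (Zs ji))
    (hindep : iIndepFun Zs μ)
    (hlaw : ∀ ji : Fin k × Fin m, Measure.map (Zs ji) μ = (P ji.2).toMeasure)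
    (Zvec : Ω → Fin m → Fin N)
    (hZvecmeas : Measurable Zvec)
    (hhit : (1 / (m : ℝ)) * ∑ i : Fin m,
        (μ {ω | ∃ j : Fin k, Zs (j, i) ω = Zvec ω i}).toReal ≥ 1 - δ) :
    -∑ v : Fin m → Fin N,
        (μ {ω | Zvec ω = v}).toReal * Real.logb 2 (μ {ω | Zvec ω = v}).toReal
      ≥ m * ((n : ℝ) * (1 - δ) - Real.logb 2 n - Real.logb 2 k - 3) := by
  have hsample (ji : Fin k × Fin m) (z : Fin N) : μ.real (Zs ji ⁻¹' {z}) ≤ 4 * log N / N := by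
    rw [measureReal_def, ← Measure.map_apply (hZsmeas ji) (measurableSet_singleton z), hlaw,
      PMF.toMeasure_apply_singleton _ _ (measurableSet_singleton z)]
    exact hP ji.2 z
  have hentropy := le_shannonEntropy_of_hits hZsmeas hindep hZvecmeas hsample
  rw [Fintype.card_fin, Fintype.card_fin] at hentropy
  set E := ∑ i, μ.real {ω | ∃ j, Zs (j, i) ω = Zvec ω i}
  have hE : m * (1 - δ) ≤ E := by
    rcases m.eq_zero_or_pos with rfl | hm
    · simp [E]
    · rwa [ge_iff_le, one_div, inv_mul_eq_div, le_div_iff₀ (by positivity), mul_comm] at hhit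
  have hlogε : logb 2 (k * (4 * log N / N)) ≤ logb 2 k + logb 2 n + 2 - n := by
    rw [hN, Nat.cast_pow, Nat.cast_ofNat]
    exact logb_mul_log_two_pow_div_le (by omega) (by exact_mod_cast hk)
  have hlogn := logb_two_le_half_sub_two (by omega : 12 ≤ n)
  have hlogk : logb 2 k ≤ n / 2 := by
    simpa only [logb_rpow two_pos (by norm_num : (2 : ℝ) ≠ 1)] using
      logb_le_logb_of_le one_lt_two (by exact_mod_cast hk) hk2
  have hlogn0 : 0 ≤ logb 2 n := logb_nonneg one_lt_two (by exact_mod_cast (by omega : 1 ≤ n))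
  have hlogk0 : 0 ≤ logb 2 k := logb_nonneg one_lt_two (by exact_mod_cast hk)
  have hE0 : 0 ≤ E := Finset.sum_nonneg fun _ _ => measureReal_nonneg
  change _ ≤ shannonEntropy fun v => μ.real {ω | Zvec ω = v}
  -- `E log₂ (1/ε) - m ≥ m (1 - δ) (n - 2 - log₂ n - log₂ k) - m`, which exceeds the claimed
  -- bound by `m δ (2 + log₂ n + log₂ k)`.
  linarith [mul_le_mul_of_nonneg_left hlogε hE0, mul_le_mul_of_nonneg_right hE
    (by linarith : 0 ≤ (n : ℝ) - 2 - logb 2 n - logb 2 k),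
    mul_nonneg (mul_nonneg m.cast_nonneg hδ0) (by linarith : 0 ≤ 2 + logb 2 n + logb 2 k)]

/-- (Generalized Theorem 7.11/Corollary 7.12, classical side
information.) Fix `n ≥ 50`, `N = 2^n`, `m, k ≥ 1` with `k ≤ 2^(n/2)` and
`m, n ≤ 10^6`, and `δ ∈ [0,1]`. Let `P i` be PMFs on `Fin N` with
`max_z P i z ≤ 4 ln N / N`, let `(Zs (j,i))` be mutually independent samples with
`Zs (j,i) ∼ P i`, and let `Zvec` be any random output tuple on the same space. If
`(1/m) ∑ i, Pr[Zvec i ∈ {Zs (j,i) : j}] ≥ 1 - δ`, then the Shannon entropy (base 2)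
of `Zvec` is at least `m (n (1-δ) - log₂ n - log₂ k - 3)`. -/
theorem stmt7 {Ω : Type*} [MeasurableSpace Ω] (μ : Measure Ω) [IsProbabilityMeasure μ]
    (n N m k : ℕ) (hn : 50 ≤ n) (hN : N = 2 ^ n)
    (hm : 1 ≤ m) (hk : 1 ≤ k) (hk2 : (k : ℝ) ≤ 2 ^ ((n : ℝ) / 2))
    (hm6 : m ≤ 10 ^ 6) (hn6 : n ≤ 10 ^ 6)
    (δ : ℝ) (hδ0 : 0 ≤ δ) (hδ1 : δ ≤ 1)
    (P : Fin m → PMF (Fin N))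
    (hP : ∀ i z, ((P i) z).toReal ≤ 4 * Real.log N / N)
    (Zs : Fin k × Fin m → Ω → Fin N)
    (hZsmeas : ∀ ji, Measurable (Zs ji))
    (hindep : iIndepFun Zs μ)
    (hlaw : ∀ ji : Fin k × Fin m, Measure.map (Zs ji) μ = (P ji.2).toMeasure)
    (Zvec : Ω → Fin m → Fin N)
    (hZvecmeas : Measurable Zvec)
    (hhit : (1 / (m : ℝ)) * ∑ i : Fin m,
        (μ {ω | ∃ j : Fin k, Zs (j, i) ω = Zvec ω i}).toReal ≥ 1 - δ) :
    -∑ v : Fin m → Fin N,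
        (μ {ω | Zvec ω = v}).toReal * Real.logb 2 (μ {ω | Zvec ω = v}).toReal
      ≥ m * ((n : ℝ) * (1 - δ) - Real.logb 2 n - Real.logb 2 k - 3) :=
  stmt7_general μ n N m k hn hN hk hk2 δ hδ0 P hP Zs hZsmeas hindep hlaw Zvec hZvecmeas hhit
end

section
/- Let N ≥ 1, K ≥ 1, and let f be drawn uniformly at random from the finite set Φ(N, K) of all functions f : Fin N → ℕ with ∑_z f(z) = K. Then Pr[∃ z, f(z) ≥ 2] ≤ K(K − 1)/N; equivalently, Pr[max_z f(z) ≤ 1] ≥ 1 − K(K−1)/N. -/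
/-!
Taking two balls out of a bin holding at least two injects the vectors of `Φ(N, K + 2)` with a
repeat in a fixed bin into `Φ(N, K)`, so by a union bound over the bins at most `N · #Φ(N, K)`
vectors of `Φ(N, K + 2)` have a repeat. As `#Φ(N, K) = multichoose N K`, the ratio
`#Φ(N, K + 2) / #Φ(N, K) = (N + K + 1)(N + K) / ((K + 2)(K + 1))` is at least
`N² / ((K + 2)(K + 1))`, which gives the bound `(K + 2)(K + 1) / N`.
-/

open Finset

namespace Nat

theorem succ_mul_multichoose_succ (n k : ℕ) :
    (k + 1) * n.multichoose (k + 1) = (n + k) * n.multichoose k := by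
  rcases n with _ | m
  · cases k <;> simp
  · rw [multichoose_eq, multichoose_eq, show m + 1 + (k + 1) - 1 = m + k + 1 by omega,
      show m + 1 + k - 1 = m + k by omega, mul_comm, ← add_one_mul_choose_eq]
    ring

end Nat

namespace Finset.Nat

theorem card_antidiagonalTuple (n k : ℕ) : #(antidiagonalTuple n k) = n.multichoose k := by
  rw [card_eq_of_equiv_fintype ((Equiv.subtypeEquivRight fun _ => mem_antidiagonalTuple).trans
    (Sym.equivNatSumOfFintype (Fin n) k).symm), Sym.card_sym_fin_eq_multichoose]

theorem card_filter_two_le_apply_le (n k : ℕ) (z : Fin n) :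
    #{f ∈ antidiagonalTuple n (k + 2) | 2 ≤ f z} ≤ #(antidiagonalTuple n k) := by
  have single_le {f : Fin n → ℕ} (hf : 2 ≤ f z) : Pi.single z 2 ≤ f := by
    intro w
    rcases eq_or_ne w z with rfl | hw
    · simpa using hf
    · simp [Pi.single_eq_of_ne hw]
  refine card_le_card_of_injOn (· - Pi.single z 2) (fun f hf => ?_) fun f hf g hg hfg => ?_
  · rw [mem_coe, mem_filter, mem_antidiagonalTuple] at hf
    rw [mem_coe, mem_antidiagonalTuple]
    simp only [Pi.sub_apply]
    rw [sum_tsub_distrib _ fun w _ => single_le hf.2 w, hf.1, sum_pi_single']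
    simp
  · rw [mem_coe, mem_filter] at hf hg
    exact (tsub_left_inj (single_le hf.2) (single_le hg.2)).1 hfg

theorem card_filter_exists_two_le_le (n k : ℕ) :
    #{f ∈ antidiagonalTuple n (k + 2) | ∃ z, 2 ≤ f z} ≤ n * #(antidiagonalTuple n k) := by
  have hunion : {f ∈ antidiagonalTuple n (k + 2) | ∃ z, 2 ≤ f z}
      = univ.biUnion fun z => {f ∈ antidiagonalTuple n (k + 2) | 2 ≤ f z} := by
    ext f; simp
  calc _ ≤ ∑ z, #{f ∈ antidiagonalTuple n (k + 2) | 2 ≤ f z} := hunion ▸ card_biUnion_le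
    _ ≤ ∑ _z : Fin n, #(antidiagonalTuple n k) :=
        sum_le_sum fun z _ => card_filter_two_le_apply_le n k z
    _ = n * #(antidiagonalTuple n k) := by simp

theorem mul_card_filter_exists_two_le_add_two_le (n k : ℕ) :
    n * #{f ∈ antidiagonalTuple n (k + 2) | ∃ z, 2 ≤ f z}
      ≤ (k + 2) * (k + 1) * #(antidiagonalTuple n (k + 2)) := by
  have h1 := Nat.succ_mul_multichoose_succ n k
  have h2 := Nat.succ_mul_multichoose_succ n (k + 1)
  have hrep := card_antidiagonalTuple n k ▸ card_filter_exists_two_le_le n k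
  rw [card_antidiagonalTuple]
  calc _ ≤ n * (n * n.multichoose k) := Nat.mul_le_mul_left n hrep
    _ ≤ (n + k + 1) * (n + k) * n.multichoose k := by
        rw [← mul_assoc]; gcongr <;> omega
    _ = (k + 1) * ((n + (k + 1)) * n.multichoose (k + 1)) := by rw [mul_assoc, ← h1]; ring
    _ = (k + 2) * (k + 1) * n.multichoose (k + 2) := by rw [← h2]; ring

theorem filter_exists_two_le_eq_empty {n K : ℕ} (hK : K < 2) :
    {f ∈ antidiagonalTuple n K | ∃ z, 2 ≤ f z} = ∅ := by
  refine filter_eq_empty_iff.2 fun f hf ⟨z, hz⟩ => ?_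
  have : f z ≤ K :=
    mem_antidiagonalTuple.1 hf ▸ single_le_sum (fun _ _ => Nat.zero_le _) (mem_univ z)
  omega

/-- Stated over `ℝ`, where `K * (K - 1)` does not truncate at `K = 0`. -/
theorem mul_card_filter_exists_two_le_le (n K : ℕ) :
    (n : ℝ) * #{f ∈ antidiagonalTuple n K | ∃ z, 2 ≤ f z}
      ≤ K * (K - 1) * #(antidiagonalTuple n K) := by
  rcases lt_or_ge K 2 with hK | hK
  · rw [filter_exists_two_le_eq_empty hK]
    interval_cases K <;> simp
  · obtain ⟨k, rfl⟩ := Nat.exists_eq_add_of_le' hK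
    have := mul_card_filter_exists_two_le_add_two_le n k
    rw [← Nat.cast_le (α := ℝ)] at this
    push_cast at this ⊢
    linarith

end Finset.Nat

theorem stmt9_general (N K : ℕ) (hN : 1 ≤ N) :
    (((Finset.Nat.antidiagonalTuple N K).filter
        (fun f : Fin N → ℕ => ∃ z, 2 ≤ f z)).card : ℝ) /
        ((Finset.Nat.antidiagonalTuple N K).card : ℝ)
      ≤ (K : ℝ) * ((K : ℝ) - 1) / N
    ∧ (((Finset.Nat.antidiagonalTuple N K).filter
        (fun f : Fin N → ℕ => ∀ z, f z ≤ 1)).card : ℝ) /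
        ((Finset.Nat.antidiagonalTuple N K).card : ℝ)
      ≥ 1 - (K : ℝ) * ((K : ℝ) - 1) / N := by
  set Φ := Finset.Nat.antidiagonalTuple N K
  have hΦ : (0 : ℝ) < #Φ := Nat.cast_pos.2 <| card_pos.2
    ⟨Pi.single ⟨0, hN⟩ K, by simp [Φ, Finset.Nat.mem_antidiagonalTuple]⟩
  have hrepeat : (#{f ∈ Φ | ∃ z, 2 ≤ f z} : ℝ) / #Φ ≤ K * (K - 1) / N := by
    rw [div_le_div_iff₀ hΦ (by exact_mod_cast hN), mul_comm]
    exact Finset.Nat.mul_card_filter_exists_two_le_le N K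
  have hcompl : #{f ∈ Φ | ∀ z, f z ≤ 1} + #{f ∈ Φ | ∃ z, 2 ≤ f z} = #Φ := by
    simp_rw [← not_lt (b := 2), Nat.lt_succ_iff, ← not_forall]
    exact card_filter_add_card_filter_not _
  refine ⟨hrepeat, ?_⟩
  have hdiv : (#{f ∈ Φ | ∀ z, f z ≤ 1} : ℝ) / #Φ = 1 - #{f ∈ Φ | ∃ z, 2 ≤ f z} / #Φ := by
    rw [eq_sub_iff_add_eq, ← add_div, ← Nat.cast_add, hcompl, div_self hΦ.ne']
  linarith

/-- Let `Φ(N, K)` be the (finite) set of frequency vectors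
`f : Fin N → ℕ` with `∑ z, f z = K`. For `f` drawn uniformly from `Φ(N, K)`, the
probability of a repeat (`∃ z, f z ≥ 2`) is at most `K (K-1) / N`; equivalently, the
probability that `max_z f z ≤ 1` is at least `1 - K (K-1) / N`. -/
theorem stmt9 (N K : ℕ) (hN : 1 ≤ N) (hK : 1 ≤ K) :
    (((Finset.Nat.antidiagonalTuple N K).filter
        (fun f : Fin N → ℕ => ∃ z, 2 ≤ f z)).card : ℝ) /
        ((Finset.Nat.antidiagonalTuple N K).card : ℝ)
      ≤ (K : ℝ) * ((K : ℝ) - 1) / N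
    ∧ (((Finset.Nat.antidiagonalTuple N K).filter
        (fun f : Fin N → ℕ => ∀ z, f z ≤ 1)).card : ℝ) /
        ((Finset.Nat.antidiagonalTuple N K).card : ℝ)
      ≥ 1 - (K : ℝ) * ((K : ℝ) - 1) / N :=
  stmt9_general N K hN
end

section
/- Let N ≥ 2, let k be an integer with 1 ≤ k < N, let u ∈ [0,1], and let p be a probability mass function on Fin N. Define two distributions on Fin N: q_A is the output of the process 'draw z_1, …, z_k i.i.d. from p; with probability u output z_I for I uniform on [k]; otherwise output a uniformly random element of Fin N ∖ {z_1,…,z_k}'; and q_B is the output of the process 'with probability u output one draw from p; otherwise output a uniformly random element of Fin N'. Then ∑_{z∈Fin N} |q_A(z) − q_B(z)| ≤ (1 − u)·[(1/(1 − k/N) − 1) + k/N] ≤ 2k/(N·(1 − k/N)). -/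
/-!
In both processes the sample from `p` is output with probability `u`, and in process A a
uniformly chosen coordinate of an i.i.d. sample is again distributed as `p`. So the two laws
differ by `(1 - u)` times the difference between the law `A` of a uniform point outside the
sample and the uniform law. Outside a sample of at most `k` points, `A z ≤ 1 / (N - k)`;
and `A z ≥ (1 - P[z is sampled]) / N`, where `P[z is sampled] ≤ k p z` by the union bound.
Hence `|A z - 1/N| ≤ (1/(N - k) - 1/N) + P[z is sampled] / N`, which sums to
`N/(N - k) - 1 + k/N`.
-/

open Finset

section ProductMeasure

variable {ι α R : Type*} [Fintype ι] [DecidableEq ι] [Fintype α] [CommSemiring R]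

theorem sum_pi_prod_eq_one {p : α → R} (hp : ∑ x, p x = 1) :
    ∑ t : ι → α, ∏ i, p (t i) = 1 := by
  rw [← Fintype.prod_sum, hp, prod_const_one]

theorem sum_pi_prod_mul_apply {p : α → R} (hp : ∑ x, p x = 1) (f : α → R) (j : ι) :
    ∑ t : ι → α, (∏ i, p (t i)) * f (t j) = ∑ x, p x * f x := by
  let g : ι → α → R := fun i x => p x * if i = j then f x else 1
  have hg : ∀ t : ι → α, ∏ i, g i (t i) = (∏ i, p (t i)) * f (t j) := by
    intro t
    simp only [g, prod_mul_distrib, prod_ite_eq', mem_univ, if_true]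
  calc ∑ t : ι → α, (∏ i, p (t i)) * f (t j)
      = ∏ i, ∑ x, g i x := by simp_rw [← hg]; exact (Fintype.prod_sum _).symm
    _ = ∑ x, p x * f x := by simp [g, apply_ite, hp]

theorem sum_pi_prod_mul_card_filter_eq [DecidableEq α] {p : α → R} (hp : ∑ x, p x = 1)
    (z : α) :
    ∑ t : ι → α, (∏ i, p (t i)) * #{i | t i = z} = Fintype.card ι * p z := by
  simp_rw [card_filter, Nat.cast_sum, mul_sum]
  rw [sum_comm]
  have hmarg (j : ι) :=
    sum_pi_prod_mul_apply hp (fun x => ((if x = z then 1 else 0 : ℕ) : R)) j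
  simp only [hmarg]
  simp

end ProductMeasure

section SampleComplement

variable {ι α : Type*} [Fintype ι] [DecidableEq ι] [Fintype α] [DecidableEq α]
  {p : α → ℝ}

variable (ι) in
noncomputable def hitProbability (p : α → ℝ) (z : α) : ℝ :=
  ∑ t : ι → α, (∏ i, p (t i)) * if ∃ i, t i = z then 1 else 0

variable (ι) in
noncomputable def complementLaw (p : α → ℝ) (z : α) : ℝ :=
  ∑ t : ι → α, (∏ i, p (t i)) *
    if ∃ i, t i = z then 0 else 1 / ((Fintype.card α : ℝ) - #(univ.image t))

theorem hitProbability_nonneg (hp0 : ∀ x, 0 ≤ p x) (z : α) : 0 ≤ hitProbability ι p z :=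
  sum_nonneg fun _ _ => mul_nonneg (prod_nonneg fun _ _ => hp0 _) (by split_ifs <;> norm_num)

theorem hitProbability_le (hp0 : ∀ x, 0 ≤ p x) (hp1 : ∑ x, p x = 1) (z : α) :
    hitProbability ι p z ≤ Fintype.card ι * p z := by
  rw [← sum_pi_prod_mul_card_filter_eq hp1 z]
  refine sum_le_sum fun t _ => mul_le_mul_of_nonneg_left ?_ (prod_nonneg fun _ _ => hp0 _)
  split_ifs with hz
  · obtain ⟨i, hi⟩ := hz
    exact_mod_cast card_pos.2 ⟨i, by simp [hi]⟩
  · positivity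

theorem complementLaw_le (hp0 : ∀ x, 0 ≤ p x) (hp1 : ∑ x, p x = 1)
    (hcard : Fintype.card ι < Fintype.card α) (z : α) :
    complementLaw ι p z ≤ 1 / ((Fintype.card α : ℝ) - Fintype.card ι) := by
  have hpos : (0 : ℝ) < Fintype.card α - Fintype.card ι := by
    rw [sub_pos]; exact_mod_cast hcard
  calc complementLaw ι p z
      ≤ ∑ t : ι → α, (∏ i, p (t i)) * (1 / ((Fintype.card α : ℝ) - Fintype.card ι)) :=
        by
        refine sum_le_sum fun t _ => mul_le_mul_of_nonneg_left ?_ (prod_nonneg fun _ _ => hp0 _)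
        split_ifs
        · positivity
        · gcongr
          exact_mod_cast card_image_le.trans_eq card_univ
    _ = 1 / ((Fintype.card α : ℝ) - Fintype.card ι) := by
        rw [← sum_mul, sum_pi_prod_eq_one hp1, one_mul]

theorem one_sub_hitProbability_div_le_complementLaw (hp0 : ∀ x, 0 ≤ p x) (hp1 : ∑ x, p x = 1)
    (hcard : Fintype.card ι < Fintype.card α) (z : α) :
    (1 - hitProbability ι p z) / Fintype.card α ≤ complementLaw ι p z := by
  calc (1 - hitProbability ι p z) / Fintype.card α
      = ∑ t : ι → α, ((∏ i, p (t i)) - (∏ i, p (t i)) * if ∃ i, t i = z then 1 else 0) /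
          Fintype.card α := by
        rw [← sum_div, sum_sub_distrib, sum_pi_prod_eq_one hp1, hitProbability]
    _ = ∑ t : ι → α, (∏ i, p (t i)) *
          if ∃ i, t i = z then 0 else 1 / (Fintype.card α : ℝ) :=
        sum_congr rfl fun t _ => by split_ifs <;> ring
    _ ≤ complementLaw ι p z := by
        refine sum_le_sum fun t _ => mul_le_mul_of_nonneg_left ?_ (prod_nonneg fun _ _ => hp0 _)
        split_ifs
        · rfl
        · have : (#(univ.image t) : ℝ) < Fintype.card α :=
            mod_cast (card_image_le.trans_eq card_univ).trans_lt hcard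
          gcongr
          linarith

theorem sum_abs_complementLaw_sub_le (hp0 : ∀ x, 0 ≤ p x)
    (hp1 : ∑ x, p x = 1) (hcard : Fintype.card ι < Fintype.card α) :
    ∑ z, |complementLaw ι p z - 1 / Fintype.card α| ≤
      (1 / (1 - (Fintype.card ι : ℝ) / Fintype.card α) - 1) +
        (Fintype.card ι : ℝ) / Fintype.card α := by
  have hkN : (Fintype.card ι : ℝ) < Fintype.card α := mod_cast hcard
  set N : ℝ := (Fintype.card α : ℝ)
  set k : ℝ := (Fintype.card ι : ℝ)
  have hk : 0 ≤ k := Nat.cast_nonneg _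
  have hgap : 1 / N ≤ 1 / (N - k) := by gcongr; linarith
  have hpoint : ∀ z, |complementLaw ι p z - 1 / N| ≤
      (1 / (N - k) - 1 / N) + hitProbability ι p z / N := by
    intro z
    have hup := complementLaw_le hp0 hp1 hcard z
    have hlow := one_sub_hitProbability_div_le_complementLaw hp0 hp1 hcard z
    have hhit : 0 ≤ hitProbability ι p z / N :=
      div_nonneg (hitProbability_nonneg hp0 z) (by linarith)
    rw [sub_div] at hlow
    exact abs_le.2 ⟨by linarith, by linarith⟩
  have hhit_sum : ∑ z, hitProbability ι p z ≤ k := by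
    calc ∑ z, hitProbability ι p z ≤ ∑ z, k * p z :=
          sum_le_sum fun z _ => hitProbability_le hp0 hp1 z
      _ = k := by rw [← mul_sum, hp1, mul_one]
  calc ∑ z, |complementLaw ι p z - 1 / N|
      ≤ ∑ z, ((1 / (N - k) - 1 / N) + hitProbability ι p z / N) :=
        sum_le_sum fun z _ => hpoint z
    _ = N * (1 / (N - k) - 1 / N) + (∑ z, hitProbability ι p z) / N := by
        rw [sum_add_distrib, sum_const, card_univ, nsmul_eq_mul, sum_div]
    _ ≤ N * (1 / (N - k) - 1 / N) + k / N := by gcongr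
    _ = (1 / (1 - k / N) - 1) + k / N := by
        have : N - k ≠ 0 := by linarith
        have : N ≠ 0 := by linarith
        field_simp

theorem processA_eq_mixture (hι : 0 < Fintype.card ι) (hp1 : ∑ x, p x = 1) (u : ℝ)
    (z : α) :
    ∑ t : ι → α, (∏ i, p (t i)) *
        (u * (#{i | t i = z} : ℝ) / Fintype.card ι +
          (1 - u) * if ∃ i, t i = z then 0
            else 1 / ((Fintype.card α : ℝ) - #(univ.image t))) =
      u * p z + (1 - u) * complementLaw ι p z := by
  have hι' : (Fintype.card ι : ℝ) ≠ 0 := by positivity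
  simp_rw [mul_add, sum_add_distrib, complementLaw, mul_sum]
  congr 1
  calc ∑ t : ι → α, (∏ i, p (t i)) * (u * (#{i | t i = z} : ℝ) / Fintype.card ι)
      = u / Fintype.card ι * ∑ t : ι → α, (∏ i, p (t i)) * #{i | t i = z} := by
        rw [mul_sum]; exact sum_congr rfl fun t _ => by ring
    _ = u * p z := by rw [sum_pi_prod_mul_card_filter_eq hp1]; field_simp
  · exact sum_congr rfl fun t _ => by ring

end SampleComplement

theorem one_sub_mul_le_two_mul_div {u x : ℝ} (hu0 : 0 ≤ u) (hx0 : 0 ≤ x)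
    (hx1 : x < 1) : (1 - u) * ((1 / (1 - x) - 1) + x) ≤ 2 * x / (1 - x) := by
  have hpos : 0 < 1 - x := by linarith
  have hgeom : 1 / (1 - x) - 1 = x / (1 - x) := by field_simp; ring
  have hx : x ≤ x / (1 - x) := le_div_self hx0 hpos (by linarith)
  calc (1 - u) * ((1 / (1 - x) - 1) + x) ≤ (1 / (1 - x) - 1) + x := by
        apply mul_le_of_le_one_left <;> linarith
    _ ≤ 2 * x / (1 - x) := by rw [hgeom, mul_div_assoc]; linarith

theorem stmt10_general (N k : ℕ) (hk1 : 1 ≤ k) (hkN : k < N)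
    (u : ℝ) (hu0 : 0 ≤ u) (hu1 : u ≤ 1)
    (p : Fin N → ℝ) (hp0 : ∀ z, 0 ≤ p z) (hp1 : ∑ z : Fin N, p z = 1)
    (qA qB : Fin N → ℝ)
    (hqA : ∀ z : Fin N, qA z =
      ∑ t : Fin k → Fin N, (∏ i : Fin k, p (t i)) *
        (u * ((Finset.univ.filter (fun i : Fin k => t i = z)).card : ℝ) / k
          + (1 - u) * (if ∃ i : Fin k, t i = z then 0
              else 1 / ((N : ℝ) - (Finset.univ.image t).card))))
    (hqB : ∀ z : Fin N, qB z = u * p z + (1 - u) / N) :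
    ∑ z : Fin N, |qA z - qB z|
        ≤ (1 - u) * ((1 / (1 - (k : ℝ) / N) - 1) + (k : ℝ) / N)
    ∧ (1 - u) * ((1 / (1 - (k : ℝ) / N) - 1) + (k : ℝ) / N)
        ≤ 2 * k / ((N : ℝ) * (1 - (k : ℝ) / N)) := by
  have hmix := processA_eq_mixture (ι := Fin k) (by rwa [Fintype.card_fin]) hp1 u
  have hbound := sum_abs_complementLaw_sub_le (ι := Fin k) hp0 hp1 (by simpa using hkN)
  simp only [Fintype.card_fin] at hmix hbound
  have hdiff : ∀ z, |qA z - qB z| = (1 - u) * |complementLaw (Fin k) p z - 1 / N| := by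
    intro z
    have hfactor : u * p z + (1 - u) * complementLaw (Fin k) p z - (u * p z + (1 - u) / N) =
        (1 - u) * (complementLaw (Fin k) p z - 1 / N) := by ring
    rw [hqA, hmix, hqB, hfactor, abs_mul, abs_of_nonneg (sub_nonneg.2 hu1)]
  refine ⟨?_, ?_⟩
  · rw [sum_congr rfl fun z _ => hdiff z, ← mul_sum]
    exact mul_le_mul_of_nonneg_left hbound (sub_nonneg.2 hu1)
  · rw [← div_div, mul_div_assoc]
    exact one_sub_mul_le_two_mul_div hu0 (by positivity)
      ((div_lt_one (mod_cast Nat.zero_lt_of_lt hkN)).2 (mod_cast hkN))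

/-- (TVD between sampling processes A and B.) Let `p` be a PMF on
`Fin N` (`N ≥ 2`), `1 ≤ k < N`, `u ∈ [0,1]`. Process A: draw `z 1, …, z k` i.i.d.
from `p`; with probability `u` output a uniformly random one of them, otherwise output
a uniform element of the complement of `{z 1, …, z k}`. Process B: with probability
`u` output one draw from `p`, otherwise output a uniform element of `Fin N`. Then the
L1 distance between the two output distributions is at most
`(1-u) ((1/(1-k/N) - 1) + k/N) ≤ 2k/(N (1-k/N))`. -/
theorem stmt10 (N k : ℕ) (hN : 2 ≤ N) (hk1 : 1 ≤ k) (hkN : k < N)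
    (u : ℝ) (hu0 : 0 ≤ u) (hu1 : u ≤ 1)
    (p : Fin N → ℝ) (hp0 : ∀ z, 0 ≤ p z) (hp1 : ∑ z : Fin N, p z = 1)
    (qA qB : Fin N → ℝ)
    (hqA : ∀ z : Fin N, qA z =
      ∑ t : Fin k → Fin N, (∏ i : Fin k, p (t i)) *
        (u * ((Finset.univ.filter (fun i : Fin k => t i = z)).card : ℝ) / k
          + (1 - u) * (if ∃ i : Fin k, t i = z then 0
              else 1 / ((N : ℝ) - (Finset.univ.image t).card))))
    (hqB : ∀ z : Fin N, qB z = u * p z + (1 - u) / N) :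
    ∑ z : Fin N, |qA z - qB z|
        ≤ (1 - u) * ((1 / (1 - (k : ℝ) / N) - 1) + (k : ℝ) / N)
    ∧ (1 - u) * ((1 / (1 - (k : ℝ) / N) - 1) + (k : ℝ) / N)
        ≤ 2 * k / ((N : ℝ) * (1 - (k : ℝ) / N)) :=
  stmt10_general N k hk1 hkN u hu0 hu1 p hp0 hp1 qA qB hqA hqB
end

section
/- Let N ≥ 2, let k be an integer with 1 ≤ k < N, let p be a probability mass function on Fin N, and let z_1, …, z_k be i.i.d. samples from p. Define r(z) = E[ 1{z ∉ {z_1,…,z_k}} / (N − |{z_1,…,z_k}|) ], i.e., r is the law of a uniformly random element of the complement of the (random) set of distinct sample values. Then for every z ∈ Fin N, |r(z) − 1/N| ≤ (1/N)·(1/(1 − k/N) − 1) + k·p(z)/N. -/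
/-!
Since the weights `∏ i, p (t i)` sum to one, `r z - 1/N` is their average of
`F t - 1/N`, where `F t` is the inner term of `r z`. If `z` is among the samples then
`|F t - 1/N| = 1/N`; otherwise the sample set has `m ≤ k` elements and
`0 ≤ 1/(N - m) - 1/N ≤ 1/(N - k) - 1/N = (1/N)(1/(1 - k/N) - 1)`. The probability that
`z` is sampled is at most `k p(z)` by the union bound over the `k` coordinates, each of
which has marginal law `p`.
-/

open Finset

section ProductWeights

variable {ι α R : Type*} [Fintype ι] [DecidableEq ι] [Fintype α] [CommSemiring R]

theorem sum_prod_apply_eq_one {p : α → R} (hp1 : ∑ x, p x = 1) :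
    ∑ t : ι → α, ∏ i, p (t i) = 1 := by
  rw [← Fintype.prod_sum (fun _ : ι => p), hp1, prod_const_one]

theorem sum_ite_apply_eq_prod_apply [DecidableEq α] {p : α → R} (hp1 : ∑ x, p x = 1) (i : ι) (a : α) :
    ∑ t : ι → α, (if t i = a then ∏ j, p (t j) else 0) = p a := by
  let g : ι → α → R := fun j x => if j = i ∧ x ≠ a then 0 else p x
  have hg : ∀ t : ι → α, (if t i = a then ∏ j, p (t j) else 0) = ∏ j, g j (t j) := by
    intro t
    by_cases hti : t i = a
    · rw [if_pos hti]
      refine prod_congr rfl fun j _ => ?_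
      exact (if_neg (by rintro ⟨rfl, h⟩; exact h hti)).symm
    · rw [if_neg hti, eq_comm]
      exact prod_eq_zero (mem_univ i) (if_pos ⟨rfl, hti⟩)
  have hg_sum : ∀ j, ∑ x, g j x = if j = i then p a else 1 := by
    intro j
    by_cases hj : j = i
    · simp [g, hj]
    · simp [g, hj, hp1]
  simp_rw [hg, ← Fintype.prod_sum g, hg_sum, prod_ite_eq', mem_univ, if_true]

theorem sum_ite_exists_apply_eq_le [DecidableEq α] {p : α → ℝ} (hp0 : ∀ x, 0 ≤ p x)
    (hp1 : ∑ x, p x = 1) (a : α) :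
    ∑ t : ι → α, (if ∃ i, t i = a then ∏ j, p (t j) else 0) ≤ Fintype.card ι * p a := by
  have hw0 : ∀ t : ι → α, 0 ≤ ∏ j, p (t j) := fun t => prod_nonneg fun j _ => hp0 (t j)
  calc ∑ t : ι → α, (if ∃ i, t i = a then ∏ j, p (t j) else 0)
      ≤ ∑ t : ι → α, ∑ i, (if t i = a then ∏ j, p (t j) else 0) := by
        refine sum_le_sum fun t _ => ?_
        have hterm_nonneg : ∀ i, 0 ≤ if t i = a then ∏ j, p (t j) else 0 :=
          fun i => by split_ifs <;> simp [hw0 t]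
        split_ifs with h
        · obtain ⟨i, hi⟩ := h
          simpa [hi] using single_le_sum (fun i _ => hterm_nonneg i) (mem_univ i)
        · exact sum_nonneg fun i _ => hterm_nonneg i
    _ = Fintype.card ι * p a := by
        rw [sum_comm]
        simp [sum_ite_apply_eq_prod_apply hp1]

end ProductWeights

theorem abs_sum_mul_sub_le {β : Type*} {s : Finset β} {w f g : β → ℝ} {c : ℝ}
    (hw0 : ∀ t ∈ s, 0 ≤ w t) (hw1 : ∑ t ∈ s, w t = 1) (hfg : ∀ t ∈ s, |f t - c| ≤ g t) :
    |∑ t ∈ s, w t * f t - c| ≤ ∑ t ∈ s, w t * g t := by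
  have hcentre : ∑ t ∈ s, w t * f t - c = ∑ t ∈ s, w t * (f t - c) := by
    simp only [mul_sub, sum_sub_distrib, ← sum_mul, hw1, one_mul]
  rw [hcentre]
  refine (abs_sum_le_sum_abs _ _).trans (sum_le_sum fun t ht => ?_)
  rw [abs_mul, abs_of_nonneg (hw0 t ht)]
  exact mul_le_mul_of_nonneg_left (hfg t ht) (hw0 t ht)

theorem abs_one_div_sub_sub_one_div_le {N m k : ℝ} (hm0 : 0 ≤ m) (hmk : m ≤ k) (hkN : k < N) :
    |1 / (N - m) - 1 / N| ≤ 1 / (N - k) - 1 / N := by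
  have hNm : 0 < N - m := by linarith
  rw [abs_of_nonneg (sub_nonneg.2 (one_div_le_one_div_of_le hNm (by linarith)))]
  gcongr

theorem stmt11_general (N k : ℕ) (hkN : k < N)
    (p : Fin N → ℝ) (hp0 : ∀ z, 0 ≤ p z) (hp1 : ∑ z : Fin N, p z = 1)
    (r : Fin N → ℝ)
    (hr : ∀ z : Fin N, r z =
      ∑ t : Fin k → Fin N, (∏ i : Fin k, p (t i)) *
        (if ∃ i : Fin k, t i = z then 0
         else 1 / ((N : ℝ) - (Finset.univ.image t).card)))
    (z : Fin N) :
    |r z - 1 / N| ≤ (1 / (N : ℝ)) * (1 / (1 - (k : ℝ) / N) - 1)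
      + (k : ℝ) * p z / N := by
  have hkN' : (k : ℝ) < N := by exact_mod_cast hkN
  have hN0 : (0 : ℝ) < N := (Nat.cast_nonneg k).trans_lt hkN'
  have hgap : 1 / (N : ℝ) ≤ 1 / (N - k) := one_div_le_one_div_of_le (by linarith) (by linarith)
  have hpoint : ∀ t : Fin k → Fin N,
      |(if ∃ i, t i = z then 0 else 1 / ((N : ℝ) - (univ.image t).card)) - 1 / N|
        ≤ (if ∃ i, t i = z then 1 / (N : ℝ) else 0) + (1 / (N - k) - 1 / N) := by
    intro t
    split_ifs
    · rw [zero_sub, abs_neg, abs_of_pos (by positivity)]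
      linarith
    · rw [zero_add]
      refine abs_one_div_sub_sub_one_div_le (Nat.cast_nonneg _) ?_ hkN'
      exact_mod_cast card_image_le.trans (card_univ.trans (Fintype.card_fin k)).le
  calc |r z - 1 / N|
      ≤ ∑ t : Fin k → Fin N, (∏ i, p (t i)) *
          ((if ∃ i, t i = z then 1 / (N : ℝ) else 0) + (1 / (N - k) - 1 / N)) :=
        hr z ▸ abs_sum_mul_sub_le (fun t _ => prod_nonneg fun i _ => hp0 (t i))
          (sum_prod_apply_eq_one hp1) (fun t _ => hpoint t)
    _ = (∑ t : Fin k → Fin N, if ∃ i, t i = z then ∏ i, p (t i) else 0) / N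
          + (1 / (N - k) - 1 / N) := by
        simp only [mul_add, sum_add_distrib, ← sum_mul, sum_prod_apply_eq_one hp1, one_mul,
          sum_div]
        congr 1
        refine sum_congr rfl fun t _ => ?_
        split_ifs <;> ring
    _ ≤ k * p z / N + (1 / (N - k) - 1 / N) := by
        gcongr
        have hunion := sum_ite_exists_apply_eq_le (ι := Fin k) hp0 hp1 z
        rw [Fintype.card_fin] at hunion
        -- the two sums differ only in the `Decidable` instance for `∃ i, t i = z`
        exact le_of_eq_of_le (by congr!) hunion
    _ = _ := by
        field_simp
        ring

/-- Let `p` be a PMF on `Fin N` (`N ≥ 2`), `1 ≤ k < N`, and let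
`r z` be the probability that a uniformly random element of the complement of the set
of distinct values among `k` i.i.d. samples from `p` equals `z`. Then for every `z`,
`|r z - 1/N| ≤ (1/N) (1/(1-k/N) - 1) + k p(z) / N`. -/
theorem stmt11 (N k : ℕ) (hN : 2 ≤ N) (hk1 : 1 ≤ k) (hkN : k < N)
    (p : Fin N → ℝ) (hp0 : ∀ z, 0 ≤ p z) (hp1 : ∑ z : Fin N, p z = 1)
    (r : Fin N → ℝ)
    (hr : ∀ z : Fin N, r z =
      ∑ t : Fin k → Fin N, (∏ i : Fin k, p (t i)) *
        (if ∃ i : Fin k, t i = z then 0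
         else 1 / ((N : ℝ) - (Finset.univ.image t).card)))
    (z : Fin N) :
    |r z - 1 / N| ≤ (1 / (N : ℝ)) * (1 / (1 - (k : ℝ) / N) - 1)
      + (k : ℝ) * p z / N :=
  stmt11_general N k hkN p hp0 hp1 r hr z
end
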